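/- If a permutation w ∈ S_n avoids the pattern 3412, contains the pattern 321 exactly once, and avoids the pattern 25314, then w avoids all 21 of the following patterns: 24531, 25314, 25341, 34512, 34521, 35412, 35421, 42531, 45123, 45213, 45231, 45312, 52314, 52341, 53124, 53142, 53412, 53421, 54123, 54213, 54231. -/

import Mathlib

/-- Build a permutation of `Fin 5` from its one-line notation (0-indexed values). -/
noncomputable def mk5 (v : Fin 5 → Fin 5) (h : Function.Bijective v := by decide) :
    Equiv.Perm (Fin 5) := Equiv.ofBijective v h

/-- `w` contains the pattern `σ`. -/
def ContainsPat {n k : ℕ} (w : Equiv.Perm (Fin n)) (σ : Equiv.Perm (Fin k)) : Prop :=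
  ∃ f : Fin k ↪o Fin n, ∀ a b : Fin k, σ a < σ b ↔ w (f a) < w (f b)

/-- `w` contains the pattern 3412 at the index set given by `f`. -/
def Occ3412 {n : ℕ} (w : Equiv.Perm (Fin n)) (f : Fin 4 ↪o Fin n) : Prop :=
  w (f 2) < w (f 3) ∧ w (f 3) < w (f 0) ∧ w (f 0) < w (f 1)

/-- `w` contains the pattern 321 at the index set given by `f`. -/
def Occ321 {n : ℕ} (w : Equiv.Perm (Fin n)) (f : Fin 3 ↪o Fin n) : Prop :=
  w (f 2) < w (f 1) ∧ w (f 1) < w (f 0)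

/-!
Pattern containment composes: an occurrence of `σ` in `w` is an order embedding along which
`w` induces `σ`, so composing it with an occurrence of a pattern in `σ` yields an occurrence of
that pattern in `w`, and distinct occurrences stay distinct because the embedding is injective.
A finite check shows that every listed pattern other than 25314 contains 3412 or contains 321
at two different index sets; so `w` cannot contain it.
-/

open Equiv Finset

section Transfer

variable {n k : ℕ} {w : Perm (Fin n)} {σ : Perm (Fin k)} {f : Fin k ↪o Fin n}

theorem Occ3412.trans {g : Fin 4 ↪o Fin k} (hg : Occ3412 σ g)
    (hf : ∀ a b, σ a < σ b ↔ w (f a) < w (f b)) : Occ3412 w (g.trans f) :=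
  ⟨(hf _ _).mp hg.1, (hf _ _).mp hg.2.1, (hf _ _).mp hg.2.2⟩

theorem Occ321.trans {g : Fin 3 ↪o Fin k} (hg : Occ321 σ g)
    (hf : ∀ a b, σ a < σ b ↔ w (f a) < w (f b)) : Occ321 w (g.trans f) :=
  ⟨(hf _ _).mp hg.1, (hf _ _).mp hg.2⟩

theorem not_containsPat_of_occ3412 (h3412 : ¬ ∃ f : Fin 4 ↪o Fin n, Occ3412 w f)
    (hσ : ∃ g, Occ3412 σ g) : ¬ ContainsPat w σ := by
  rintro ⟨f, hf⟩
  obtain ⟨g, hg⟩ := hσ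
  exact h3412 ⟨g.trans f, hg.trans hf⟩

theorem not_containsPat_of_two_occ321 (h321 : ∃! f : Fin 3 ↪o Fin n, Occ321 w f)
    {g₁ g₂ : Fin 3 ↪o Fin k} (hne : g₁ ≠ g₂) (hg₁ : Occ321 σ g₁) (hg₂ : Occ321 σ g₂) :
    ¬ ContainsPat w σ := by
  rintro ⟨f, hf⟩
  have heq : g₁.trans f = g₂.trans f := h321.unique (hg₁.trans hf) (hg₂.trans hf)
  exact hne <| DFunLike.ext _ _ fun i => f.injective (DFunLike.congr_fun heq i)

end Transfer

section Indices

variable {k : ℕ} {σ : Perm (Fin k)}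

def occ321Triples (σ : Perm (Fin k)) : Finset (Fin k × Fin k × Fin k) :=
  {t | t.1 < t.2.1 ∧ t.2.1 < t.2.2 ∧ σ t.2.2 < σ t.2.1 ∧ σ t.2.1 < σ t.1}

theorem exists_occ3412_of_lt {a b c d : Fin k} (hab : a < b) (hbc : b < c) (hcd : c < d)
    (h : σ c < σ d ∧ σ d < σ a ∧ σ a < σ b) : ∃ g, Occ3412 σ g :=
  ⟨OrderEmbedding.ofStrictMono ![a, b, c, d] <| Fin.strictMono_iff_lt_succ.mpr fun i => by
    fin_cases i <;> assumption, h⟩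

theorem exists_occ321_of_mem_occ321Triples {t : Fin k × Fin k × Fin k}
    (ht : t ∈ occ321Triples σ) : ∃ g, Occ321 σ g ∧ (g 0, g 1, g 2) = t := by
  obtain ⟨h01, h12, h⟩ := (mem_filter.mp ht).2
  exact ⟨OrderEmbedding.ofStrictMono ![t.1, t.2.1, t.2.2] <| Fin.strictMono_iff_lt_succ.mpr
    fun i => by fin_cases i <;> assumption, h, rfl⟩

theorem exists_ne_occ321_of_one_lt_card (h : 1 < #(occ321Triples σ)) :
    ∃ g₁ g₂, g₁ ≠ g₂ ∧ Occ321 σ g₁ ∧ Occ321 σ g₂ := by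
  obtain ⟨t₁, ht₁, t₂, ht₂, hne⟩ := one_lt_card.mp h
  obtain ⟨g₁, hg₁, rfl⟩ := exists_occ321_of_mem_occ321Triples ht₁
  obtain ⟨g₂, hg₂, rfl⟩ := exists_occ321_of_mem_occ321Triples ht₂
  exact ⟨g₁, g₂, fun h => hne (h ▸ rfl), hg₁, hg₂⟩

end Indices

theorem listed_pattern_trichotomy :
    ∀ σ ∈ [mk5 ![1,3,4,2,0], mk5 ![1,4,2,0,3], mk5 ![1,4,2,3,0], mk5 ![2,3,4,0,1],
           mk5 ![2,3,4,1,0], mk5 ![2,4,3,0,1], mk5 ![2,4,3,1,0], mk5 ![3,1,4,2,0],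
           mk5 ![3,4,0,1,2], mk5 ![3,4,1,0,2], mk5 ![3,4,1,2,0], mk5 ![3,4,2,0,1],
           mk5 ![4,1,2,0,3], mk5 ![4,1,2,3,0], mk5 ![4,2,0,1,3], mk5 ![4,2,0,3,1],
           mk5 ![4,2,3,0,1], mk5 ![4,2,3,1,0], mk5 ![4,3,0,1,2], mk5 ![4,3,1,0,2],
           mk5 ![4,3,1,2,0]],
      σ = mk5 ![1,4,2,0,3] ∨
        (∃ a b c d : Fin 5, a < b ∧ b < c ∧ c < d ∧ σ c < σ d ∧ σ d < σ a ∧ σ a < σ b) ∨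
        1 < #(occ321Triples σ) := by
  decide +kernel

/-- If `w` avoids the pattern 3412, contains the pattern 321 exactly once, and avoids
the pattern 25314, then `w` avoids all 21 listed patterns. -/
theorem stmt4 {n : ℕ} (w : Equiv.Perm (Fin n))
    (h1 : ¬ ∃ f : Fin 4 ↪o Fin n, Occ3412 w f)
    (h2 : ∃! f : Fin 3 ↪o Fin n, Occ321 w f)
    (h3 : ¬ ContainsPat w (mk5 ![1,4,2,0,3])) :
    ∀ σ ∈ [mk5 ![1,3,4,2,0], mk5 ![1,4,2,0,3], mk5 ![1,4,2,3,0], mk5 ![2,3,4,0,1],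
           mk5 ![2,3,4,1,0], mk5 ![2,4,3,0,1], mk5 ![2,4,3,1,0], mk5 ![3,1,4,2,0],
           mk5 ![3,4,0,1,2], mk5 ![3,4,1,0,2], mk5 ![3,4,1,2,0], mk5 ![3,4,2,0,1],
           mk5 ![4,1,2,0,3], mk5 ![4,1,2,3,0], mk5 ![4,2,0,1,3], mk5 ![4,2,0,3,1],
           mk5 ![4,2,3,0,1], mk5 ![4,2,3,1,0], mk5 ![4,3,0,1,2], mk5 ![4,3,1,0,2],
           mk5 ![4,3,1,2,0]],
      ¬ ContainsPat w σ := by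
  intro σ hσ
  rcases listed_pattern_trichotomy σ hσ with rfl | ⟨a, b, c, d, hab, hbc, hcd, h3412⟩ | h321
  · exact h3
  · exact not_containsPat_of_occ3412 h1 (exists_occ3412_of_lt hab hbc hcd h3412)
  · obtain ⟨g₁, g₂, hne, hg₁, hg₂⟩ := exists_ne_occ321_of_one_lt_card h321
    exact not_containsPat_of_two_occ321 h2 hne hg₁ hg₂
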